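/- Assume the periodic perforations and Assumption (A2) as described in the context, where each 𝒪_k is an open subset of ℝ^d. Then there exists ρ > 0 such that for every k ∈ ℤ^d with 𝒪_k ∩ 𝒪_k^per ≠ ∅, there exist a point x ∈ ℝ^d and a radius r > 0 such that the closed ball of center x and radius r is contained in 𝒪_k ∩ 𝒪_k^per and has Lebesgue measure at least ρ. -/

import Mathlib

open MeasureTheory Metric Set Filter Topology Asymptotics RealInnerProductSpace Pointwise

noncomputable section

abbrev Euc (d : ℕ) := EuclideanSpace ℝ (Fin d)

def unitCube (d : ℕ) : Set (Euc d) := {x | ∀ i, x i ∈ Set.Ioo (0:ℝ) 1}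

def closedUnitCube (d : ℕ) : Set (Euc d) := {x | ∀ i, x i ∈ Set.Icc (0:ℝ) 1}

def box {d : ℕ} (a b : Fin d → ℝ) : Set (Euc d) := {x | ∀ i, x i ∈ Set.Icc (a i) (b i)}

def cell (d : ℕ) (k : Fin d → ℤ) : Set (Euc d) := {x | ∀ i, x i - (k i : ℝ) ∈ Set.Ioo (0:ℝ) 1}

def perHole {d : ℕ} (Oper : Set (Euc d)) (k : Fin d → ℤ) : Set (Euc d) :=
  {x | (show Euc d from WithLp.toLp 2 (fun i => x i - (k i : ℝ))) ∈ Oper}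

def perHoles {d : ℕ} (Oper : Set (Euc d)) : Set (Euc d) := ⋃ k : Fin d → ℤ, perHole Oper k

def holes {d : ℕ} (O : (Fin d → ℤ) → Set (Euc d)) : Set (Euc d) := ⋃ k, O k

def perPlus {d : ℕ} (Oper : Set (Euc d)) (k : Fin d → ℤ) (a : ℝ) : Set (Euc d) :=
  {x | Metric.infDist x (perHole Oper k) < a}

def perMinus {d : ℕ} (Oper : Set (Euc d)) (k : Fin d → ℤ) (a : ℝ) : Set (Euc d) :=
  {x ∈ perHole Oper k | a < Metric.infDist x (frontier (perHole Oper k))}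

def lap {d : ℕ} (w : Euc d → ℝ) (x : Euc d) : ℝ :=
  ∑ i, fderiv ℝ (fun y => fderiv ℝ w y (EuclideanSpace.single i 1)) x (EuclideanSpace.single i 1)

/-! Fix a ball `B(x₀, R) ⊆ 𝒪₀^per`. Summability gives `α k < R / 2` for all but finitely many `k`;
for those, the closed ball of radius `R / 2` about `x₀ + k` lies in `𝒪_k^per` at distance at least
`R / 2 > α k` from its boundary, hence in `𝒪_k^{per,−}(α k) ⊆ 𝒪_k`. Each of the finitely many
remaining intersections is a nonempty open set and so contains some closed ball of positive radius.
A positive lower bound for all these radii gives `ρ`. -/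

theorem exists_pos_forall_le_of_eventually_le {ι : Type*} {S : Set ι} {f : ι → ℝ} {c : ℝ}
    (hf : ∀ i ∈ S, 0 < f i) (hc : 0 < c) (hev : ∀ᶠ i in cofinite, i ∈ S → c ≤ f i) :
    ∃ ε > 0, ∀ i ∈ S, ε ≤ f i := by
  have hsmall : ∀ᶠ ε in 𝓝[>] (0 : ℝ), ∀ i ∈ {i | ¬(i ∈ S → c ≤ f i)}, ε ≤ f i :=
    (eventually_all_finite hev).2 fun i hi ↦ eventually_nhdsWithin_of_eventually_nhds
      (eventually_le_nhds (hf i (Classical.not_imp.1 hi).1))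
  obtain ⟨ε, ⟨hεf, hεc⟩, hε⟩ :=
    (hsmall.and (eventually_nhdsWithin_of_eventually_nhds (eventually_le_nhds hc))).and
      self_mem_nhdsWithin |>.exists
  refine ⟨ε, hε, fun i hiS ↦ ?_⟩
  by_cases hi : i ∈ S → c ≤ f i
  exacts [hεc.trans (hi hiS), hεf i hi]

theorem le_infDist_frontier_of_ball_subset {X : Type*} [PseudoMetricSpace X] {s : Set X}
    {c y : X} {R : ℝ} (hs : ball c R ⊆ s) (hfr : (frontier s).Nonempty) :
    R - dist y c ≤ infDist y (frontier s) := by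
  refine (le_infDist hfr).2 fun z hz ↦ ?_
  have hzc : R ≤ dist z c :=
    not_lt.1 fun h ↦ hz.2 (interior_maximal hs isOpen_ball (mem_ball.2 h))
  linarith [dist_triangle_left z c y]

theorem measure_closedBall_zero_le {E : Type*} [NormedAddCommGroup E] [NormedSpace ℝ E]
    [MeasurableSpace E] [BorelSpace E] [FiniteDimensional ℝ E] (μ : Measure E)
    [μ.IsAddHaarMeasure] (x : E) {r s : ℝ} (h : r ≤ s) :
    μ (closedBall 0 r) ≤ μ (closedBall x s) := by
  rw [← Measure.addHaar_closedBall_center μ x r]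
  exact measure_mono (closedBall_subset_closedBall h)

section PeriodicHoles

variable {d : ℕ} {Oper : Set (Euc d)} (k : Fin d → ℤ)

def intVec : Euc d := WithLp.toLp 2 fun i ↦ (k i : ℝ)

theorem perHole_eq_preimage : perHole Oper k = (· - intVec k) ⁻¹' Oper := rfl

theorem isOpen_perHole (hOper : IsOpen Oper) : IsOpen (perHole Oper k) := by
  rw [perHole_eq_preimage]
  exact hOper.preimage (continuous_id.sub continuous_const)

theorem ball_add_intVec_subset_perHole {x : Euc d} {R : ℝ} (h : ball x R ⊆ Oper) :
    ball (x + intVec k) R ⊆ perHole Oper k := by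
  rw [perHole_eq_preimage]
  exact fun y hy ↦ h <| mem_ball.2 <| by rwa [dist_sub_eq_dist_add_left]

theorem zero_notMem_unitCube (hd : 0 < d) : (0 : Euc d) ∉ unitCube d :=
  fun h ↦ (h ⟨0, hd⟩).1.false

-- `infDist x ∅ = 0`, so without this `perMinus Oper k a` would be empty for `a ≥ 0`.
theorem nonempty_frontier_perHole (hd : 0 < d) (hOperNe : Oper.Nonempty)
    (hOperQ : closure Oper ⊆ unitCube d) : (frontier (perHole Oper k)).Nonempty := by
  obtain ⟨x, hx⟩ := hOperNe
  refine nonempty_frontier_iff.2 ⟨⟨x + intVec k, by simpa [perHole_eq_preimage]⟩, ?_⟩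
  intro huniv
  have h0 : intVec k - intVec k ∈ Oper :=
    (huniv ▸ mem_univ (intVec k) : intVec k ∈ perHole Oper k)
  exact zero_notMem_unitCube hd (hOperQ (subset_closure (by simpa using h0)))

theorem closedBall_add_intVec_subset_perMinus {x : Euc d} {R a : ℝ} (hR : 0 < R)
    (hfr : (frontier (perHole Oper k)).Nonempty) (h : ball x R ⊆ Oper) (ha : a < R / 2) :
    closedBall (x + intVec k) (R / 2) ⊆ perMinus Oper k a := by
  intro y hy
  have hyR : dist y (x + intVec k) ≤ R / 2 := hy
  have hball := ball_add_intVec_subset_perHole k h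
  refine ⟨hball (mem_ball.2 (by linarith)), ?_⟩
  linarith [le_infDist_frontier_of_ball_subset (y := y) hball hfr]

end PeriodicHoles

theorem uniform_ball_in_intersection_general (d : ℕ) (hd : 2 ≤ d)
    (Oper : Set (Euc d)) (hOperOpen : IsOpen Oper) (hOperNe : Oper.Nonempty)
    (hOperQ : closure Oper ⊆ unitCube d)
    (O : (Fin d → ℤ) → Set (Euc d)) (hOopen : ∀ k, IsOpen (O k))
    (α : (Fin d → ℤ) → ℝ) (hαsum : Summable α)
    (hA2 : ∀ k, perMinus Oper k (α k) ⊆ O k ∧ O k ⊆ perPlus Oper k (α k)) :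
    ∃ ρ > (0 : ℝ), ∀ k : Fin d → ℤ, (O k ∩ perHole Oper k).Nonempty →
      ∃ (x : Euc d) (r : ℝ), 0 < r ∧
        Metric.closedBall x r ⊆ O k ∩ perHole Oper k ∧
        ENNReal.ofReal ρ ≤ volume (Metric.closedBall x r) := by
  obtain ⟨x₀, hx₀⟩ := hOperNe
  obtain ⟨R, hR, hball⟩ := isOpen_iff.1 hOperOpen x₀ hx₀
  have hwitness : ∀ k, (O k ∩ perHole Oper k).Nonempty → ∃ x, ∃ r > 0,
      closedBall x r ⊆ O k ∩ perHole Oper k ∧ (α k < R / 2 → R / 2 ≤ r) := by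
    rintro k ⟨y, hy⟩
    by_cases hk : α k < R / 2
    · have hsub := closedBall_add_intVec_subset_perMinus k hR
        (nonempty_frontier_perHole k (by omega) ⟨x₀, hx₀⟩ hOperQ) hball hk
      exact ⟨x₀ + intVec k, R / 2, half_pos hR,
        fun z hz ↦ ⟨(hA2 k).1 (hsub hz), (hsub hz).1⟩, fun _ ↦ le_rfl⟩
    · obtain ⟨r, hr, hsub⟩ := nhds_basis_closedBall.mem_iff.1
        (((hOopen k).inter (isOpen_perHole k hOperOpen)).mem_nhds hy)
      exact ⟨y, r, hr, hsub, fun h ↦ absurd h hk⟩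
  choose! x r hr hsub hge using hwitness
  have hgood : ∀ᶠ k in cofinite, α k < R / 2 :=
    hαsum.tendsto_cofinite_zero.eventually (gt_mem_nhds (half_pos hR))
  obtain ⟨ε, hε, hεr⟩ := exists_pos_forall_le_of_eventually_le hr (half_pos hR)
    (hgood.mono fun k hk hne ↦ hge k hne hk)
  refine ⟨(volume (closedBall (0 : Euc d) ε)).toReal,
    ENNReal.toReal_pos (measure_closedBall_pos _ _ hε).ne' measure_closedBall_lt_top.ne,
    fun k hk ↦ ⟨x k, r k, hr k hk, hsub k hk, ?_⟩⟩
  exact ENNReal.ofReal_toReal_le.trans (measure_closedBall_zero_le volume _ (hεr k hk))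

/-- perturbed perforations meeting their periodic counterparts contain closed
balls of uniformly positive volume inside the intersection (Lemma A.2 of the paper). -/
theorem uniform_ball_in_intersection (d : ℕ) (hd : 2 ≤ d)
    (Oper : Set (Euc d)) (hOperOpen : IsOpen Oper) (hOperNe : Oper.Nonempty)
    (hOperQ : closure Oper ⊆ unitCube d)
    (O : (Fin d → ℤ) → Set (Euc d)) (hOopen : ∀ k, IsOpen (O k))
    (α : (Fin d → ℤ) → ℝ) (hαpos : ∀ k, 0 ≤ α k) (hαsum : Summable α)
    (hA2 : ∀ k, perMinus Oper k (α k) ⊆ O k ∧ O k ⊆ perPlus Oper k (α k)) :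
    ∃ ρ > (0 : ℝ), ∀ k : Fin d → ℤ, (O k ∩ perHole Oper k).Nonempty →
      ∃ (x : Euc d) (r : ℝ), 0 < r ∧
        Metric.closedBall x r ⊆ O k ∩ perHole Oper k ∧
        ENNReal.ofReal ρ ≤ volume (Metric.closedBall x r) :=
  uniform_ball_in_intersection_general d hd Oper hOperOpen hOperNe hOperQ O hOopen α hαsum hA2
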